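/- Given the candidate Lyapunov function V = ½[log(k_b'²/(k_b'² − eᵀPe)) + e_dᵀPe_d + tr(K̃_xᵀΓ_x⁻¹K̃_x) + tr(K̃_rᵀΓ_r⁻¹K̃_r) + tr(K_dᵀΓ_d⁻¹K_d) + tr(K_1ᵀΓ_1⁻¹K_1)], substituting the update laws K̂̇_x = −[Γ_x BᵀP e xᵀ/(k_b'² − eᵀPe) + Γ_x BᵀP e_d xᵀ], K̂̇_r = −[Γ_r BᵀP e rᵀ/(k_b'² − eᵀPe) + Γ_r BᵀP e_d rᵀ], K̇_d = −[Γ_d P e Δuᵀ/(k_b'² − eᵀPe) + Γ_d P e_d Δuᵀ], K̇_1 = −Γ_1 P e Δuᵀ/(k_b'² − eᵀPe) into the derivative of V along ė = A_r e + BK̃_x x + BK̃_r r + BΔu and ė_d = A_r e_d + BK̃_x x + BK̃_r r + K_dΔu with B = K_d + K_1 yields V̇ = −½(eᵀQe/(k_b'² − eᵀPe) + e_dᵀQe_d), where A_rᵀP + PA_r = −Q. -/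

import Mathlib

open scoped Matrix
open Matrix

private lemma quad_deriv {n : ℕ} (M : Matrix (Fin n) (Fin n) ℝ) {u v : ℝ → Fin n → ℝ}
    {u' v' : Fin n → ℝ} {t : ℝ}
    (hu : ∀ i, HasDerivAt (fun τ => u τ i) (u' i) t)
    (hv : ∀ i, HasDerivAt (fun τ => v τ i) (v' i) t) :
    HasDerivAt (fun τ => u τ ⬝ᵥ M.mulVec (v τ))
      (u' ⬝ᵥ M.mulVec (v t) + u t ⬝ᵥ M.mulVec v') t := by
  have h : HasDerivAt (fun τ => ∑ i, u τ i * ∑ j, M i j * v τ j)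
      (∑ i, (u' i * ∑ j, M i j * v t j + u t i * ∑ j, M i j * v' j)) t := by
    apply HasDerivAt.fun_sum
    intro i _
    exact (hu i).mul (HasDerivAt.fun_sum fun j _ => (hv j).const_mul (M i j))
  have e1 : (fun τ => u τ ⬝ᵥ M.mulVec (v τ)) = fun τ => ∑ i, u τ i * ∑ j, M i j * v τ j := by
    funext τ; simp [dotProduct, Matrix.mulVec]
  have e2 : u' ⬝ᵥ M.mulVec (v t) + u t ⬝ᵥ M.mulVec v'
      = ∑ i, (u' i * ∑ j, M i j * v t j + u t i * ∑ j, M i j * v' j) := by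
    simp [dotProduct, Matrix.mulVec, Finset.sum_add_distrib]
  rw [e1, e2]; exact h

private lemma trace_deriv {ι κ : Type*} [Fintype ι] [Fintype κ] (M : Matrix ι ι ℝ)
    {K : ℝ → Matrix ι κ ℝ} {K' : Matrix ι κ ℝ} {t : ℝ}
    (hK : ∀ i j, HasDerivAt (fun τ => K τ i j) (K' i j) t) :
    HasDerivAt (fun τ => ((K τ)ᵀ * M * K τ).trace)
      ((K'ᵀ * M * K t).trace + ((K t)ᵀ * M * K').trace) t := by
  have h : HasDerivAt (fun τ => ∑ j, ∑ i, (∑ k, K τ k j * M k i) * K τ i j)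
      (∑ j, ∑ i, ((∑ k, K' k j * M k i) * K t i j + (∑ k, K t k j * M k i) * K' i j)) t := by
    apply HasDerivAt.fun_sum; intro j _; apply HasDerivAt.fun_sum; intro i _
    exact (HasDerivAt.fun_sum fun k _ => (hK k j).mul_const (M k i)).mul (hK i j)
  have e1 : (fun τ => ((K τ)ᵀ * M * K τ).trace)
      = fun τ => ∑ j, ∑ i, (∑ k, K τ k j * M k i) * K τ i j := by
    funext τ
    simp [Matrix.trace, Matrix.mul_apply, Matrix.diag, Matrix.transpose_apply]
  have e2 : (K'ᵀ * M * K t).trace + ((K t)ᵀ * M * K').trace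
      = ∑ j, ∑ i, ((∑ k, K' k j * M k i) * K t i j + (∑ k, K t k j * M k i) * K' i j) := by
    simp [Matrix.trace, Matrix.mul_apply, Matrix.diag, Matrix.transpose_apply,
      Finset.sum_add_distrib]
  rw [e1, e2]; exact h

private lemma trace_vecMulVec {ι κ : Type*} [Fintype ι] [Fintype κ]
    (A : Matrix ι κ ℝ) (u : ι → ℝ) (v : κ → ℝ) :
    (Aᵀ * Matrix.vecMulVec u v).trace = u ⬝ᵥ A.mulVec v := by
  simp only [Matrix.trace, Matrix.mul_apply, Matrix.vecMulVec_apply, Matrix.diag,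
    Matrix.transpose_apply, dotProduct, Matrix.mulVec, Finset.mul_sum]
  rw [Finset.sum_comm]
  apply Finset.sum_congr rfl; intro i _; apply Finset.sum_congr rfl; intro j _; ring

private lemma trace_mul_vecMulVec {ι κ : Type*} [Fintype ι] [Fintype κ]
    (W : Matrix κ ι ℝ) (u : ι → ℝ) (v : κ → ℝ) :
    (W * Matrix.vecMulVec u v).trace = u ⬝ᵥ Wᵀ.mulVec v := by
  rw [← Matrix.transpose_transpose W, _root_.trace_vecMulVec, Matrix.transpose_transpose]

private lemma mulVec_dot_mulVec {ι κ : Type*} [Fintype ι] [Fintype κ]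
    (M : Matrix ι κ ℝ) (N : Matrix ι ι ℝ) (u : κ → ℝ) (v : ι → ℝ) :
    M.mulVec u ⬝ᵥ N.mulVec v = u ⬝ᵥ (Mᵀ * N).mulVec v := by
  rw [← Matrix.mulVec_mulVec, Matrix.dotProduct_mulVec u, Matrix.vecMul_transpose]

private lemma dot_symm {ι : Type*} [Fintype ι] (P : Matrix ι ι ℝ) (hP : Pᵀ = P)
    (u v : ι → ℝ) : u ⬝ᵥ P.mulVec v = v ⬝ᵥ P.mulVec u := by
  rw [Matrix.dotProduct_mulVec, ← hP, Matrix.vecMul_transpose, hP, dotProduct_comm]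

private lemma trace_flip {ι κ : Type*} [Fintype ι] [Fintype κ] [DecidableEq ι]
    (Γ : Matrix ι ι ℝ) (hΓ : Γᵀ = Γ) (A C : Matrix ι κ ℝ) :
    (Aᵀ * Γ⁻¹ * C).trace = (Cᵀ * Γ⁻¹ * A).trace := by
  rw [← Matrix.trace_transpose (Aᵀ * Γ⁻¹ * C)]
  congr 1
  rw [Matrix.transpose_mul, Matrix.transpose_mul, Matrix.transpose_transpose,
    Matrix.transpose_nonsing_inv, hΓ, Matrix.mul_assoc]

private lemma lyap_quad {n : ℕ} {Ar P Q : Matrix (Fin n) (Fin n) ℝ} (hPt : Pᵀ = P)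
    (hlyap : Arᵀ * P + P * Ar = -Q) (E : Fin n → ℝ) :
    E ⬝ᵥ P.mulVec (Ar.mulVec E) + E ⬝ᵥ P.mulVec (Ar.mulVec E) = -(E ⬝ᵥ Q.mulVec E) := by
  have l1 : E ⬝ᵥ P.mulVec (Ar.mulVec E) = E ⬝ᵥ (P * Ar).mulVec E := by
    rw [Matrix.mulVec_mulVec]
  have l2 : E ⬝ᵥ P.mulVec (Ar.mulVec E) = E ⬝ᵥ (Arᵀ * P).mulVec E := by
    rw [dot_symm P hPt E (Ar.mulVec E), mulVec_dot_mulVec]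
  calc E ⬝ᵥ P.mulVec (Ar.mulVec E) + E ⬝ᵥ P.mulVec (Ar.mulVec E)
      = E ⬝ᵥ ((Arᵀ * P) + (P * Ar)).mulVec E := by
        rw [Matrix.add_mulVec, dotProduct_add, ← l1, ← l2]
    _ = -(E ⬝ᵥ Q.mulVec E) := by rw [hlyap, Matrix.neg_mulVec, dotProduct_neg]

private lemma inv_cancel {ι κ ρ : Type*} [Fintype ι] [Fintype κ] [Fintype ρ] [DecidableEq κ]
    (A : Matrix ι κ ℝ) {Γ : Matrix κ κ ℝ} (h : IsUnit Γ.det) (C : Matrix κ ρ ℝ) :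
    A * Γ⁻¹ * (Γ * C) = A * C := by
  rw [Matrix.mul_assoc, ← Matrix.mul_assoc Γ⁻¹, Matrix.nonsing_inv_mul _ h, Matrix.one_mul]

private lemma trace_term {ι κ ρ : Type*} [Fintype ι] [Fintype κ] [Fintype ρ] [DecidableEq ι]
    (K : Matrix ι κ ℝ) {Γ : Matrix ι ι ℝ} (h : IsUnit Γ.det)
    (M : Matrix ι ρ ℝ) (u : ρ → ℝ) (v : κ → ℝ) :
    (Kᵀ * Γ⁻¹ * (Γ * M * Matrix.vecMulVec u v)).trace = u ⬝ᵥ (Mᵀ * K).mulVec v := by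
  have h1 : Kᵀ * Γ⁻¹ * (Γ * M * Matrix.vecMulVec u v) = (Kᵀ * M) * Matrix.vecMulVec u v := by
    rw [Matrix.mul_assoc Γ, inv_cancel _ h, Matrix.mul_assoc]
  rw [h1, trace_mul_vecMulVec, Matrix.transpose_mul, Matrix.transpose_transpose]
theorem stmt19 (n m : ℕ)
    (Ar P Q : Matrix (Fin n) (Fin n) ℝ)
    (B : Matrix (Fin n) (Fin m) ℝ)
    (Γx Γr : Matrix (Fin m) (Fin m) ℝ) (Γd Γ1 : Matrix (Fin n) (Fin n) ℝ)
    (hP : P.PosDef) (hQ : Q.PosDef)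
    (hΓx : Γx.PosDef) (hΓr : Γr.PosDef) (hΓd : Γd.PosDef) (hΓ1 : Γ1.PosDef)
    (hlyap : Arᵀ * P + P * Ar = -Q)
    (kb : ℝ) (hkb : 0 < kb)
    (e ed x : ℝ → Fin n → ℝ) (r Δu : ℝ → Fin m → ℝ)
    (Ktx : ℝ → Matrix (Fin m) (Fin n) ℝ) (Ktr : ℝ → Matrix (Fin m) (Fin m) ℝ)
    (Kd K1 : ℝ → Matrix (Fin n) (Fin m) ℝ)
    (V : ℝ → ℝ)
    (hV : ∀ τ, V τ = (1/2) * (Real.log (kb ^ 2 / (kb ^ 2 - e τ ⬝ᵥ P.mulVec (e τ)))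
      + ed τ ⬝ᵥ P.mulVec (ed τ)
      + ((Ktx τ)ᵀ * Γx⁻¹ * Ktx τ).trace
      + ((Ktr τ)ᵀ * Γr⁻¹ * Ktr τ).trace
      + ((Kd τ)ᵀ * Γd⁻¹ * Kd τ).trace
      + ((K1 τ)ᵀ * Γ1⁻¹ * K1 τ).trace))
    (t : ℝ)
    (hbar : e t ⬝ᵥ P.mulVec (e t) < kb ^ 2)
    (hB : Kd t + K1 t = B)
    (he : HasDerivAt e (Ar.mulVec (e t) + B.mulVec ((Ktx t).mulVec (x t))
      + B.mulVec ((Ktr t).mulVec (r t)) + B.mulVec (Δu t)) t)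
    (hed : HasDerivAt ed (Ar.mulVec (ed t) + B.mulVec ((Ktx t).mulVec (x t))
      + B.mulVec ((Ktr t).mulVec (r t)) + (Kd t).mulVec (Δu t)) t)
    (hKtx : ∀ i j, HasDerivAt (fun τ => Ktx τ i j)
      (-((kb ^ 2 - e t ⬝ᵥ P.mulVec (e t))⁻¹ • (Γx * Bᵀ * P * Matrix.vecMulVec (e t) (x t))
        + Γx * Bᵀ * P * Matrix.vecMulVec (ed t) (x t)) i j) t)
    (hKtr : ∀ i j, HasDerivAt (fun τ => Ktr τ i j)
      (-((kb ^ 2 - e t ⬝ᵥ P.mulVec (e t))⁻¹ • (Γr * Bᵀ * P * Matrix.vecMulVec (e t) (r t))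
        + Γr * Bᵀ * P * Matrix.vecMulVec (ed t) (r t)) i j) t)
    (hKd : ∀ i j, HasDerivAt (fun τ => Kd τ i j)
      (-((kb ^ 2 - e t ⬝ᵥ P.mulVec (e t))⁻¹ • (Γd * P * Matrix.vecMulVec (e t) (Δu t))
        + Γd * P * Matrix.vecMulVec (ed t) (Δu t)) i j) t)
    (hK1 : ∀ i j, HasDerivAt (fun τ => K1 τ i j)
      (-((kb ^ 2 - e t ⬝ᵥ P.mulVec (e t))⁻¹ • (Γ1 * P * Matrix.vecMulVec (e t) (Δu t))) i j) t) :
    HasDerivAt V (-(1/2) * ((e t ⬝ᵥ Q.mulVec (e t)) / (kb ^ 2 - e t ⬝ᵥ P.mulVec (e t))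
      + ed t ⬝ᵥ Q.mulVec (ed t))) t := by
  have hPt : Pᵀ = P := hP.1
  have hΓxt : Γxᵀ = Γx := hΓx.1
  have hΓrt : Γrᵀ = Γr := hΓr.1
  have hΓdt : Γdᵀ = Γd := hΓd.1
  have hΓ1t : Γ1ᵀ = Γ1 := hΓ1.1
  have hΓxu : IsUnit Γx.det := isUnit_iff_ne_zero.mpr hΓx.det_pos.ne'
  have hΓru : IsUnit Γr.det := isUnit_iff_ne_zero.mpr hΓr.det_pos.ne'
  have hΓdu : IsUnit Γd.det := isUnit_iff_ne_zero.mpr hΓd.det_pos.ne'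
  have hΓ1u : IsUnit Γ1.det := isUnit_iff_ne_zero.mpr hΓ1.det_pos.ne'
  have hs : 0 < kb ^ 2 - e t ⬝ᵥ P.mulVec (e t) := sub_pos.mpr hbar
  set s : ℝ := kb ^ 2 - e t ⬝ᵥ P.mulVec (e t) with hsdef
  set E : Fin n → ℝ := e t with hE
  set Ed : Fin n → ℝ := ed t with hEd
  set X : Fin n → ℝ := x t with hX
  set R : Fin m → ℝ := r t with hR
  set U : Fin m → ℝ := Δu t with hU
  set Kx : Matrix (Fin m) (Fin n) ℝ := Ktx t with hKx
  set Kr : Matrix (Fin m) (Fin m) ℝ := Ktr t with hKr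
  set KD : Matrix (Fin n) (Fin m) ℝ := Kd t with hKD
  set KI : Matrix (Fin n) (Fin m) ℝ := K1 t with hKI
  set De : Fin n → ℝ := Ar.mulVec E + B.mulVec (Kx.mulVec X) + B.mulVec (Kr.mulVec R)
    + B.mulVec U with hDe
  set Ded : Fin n → ℝ := Ar.mulVec Ed + B.mulVec (Kx.mulVec X) + B.mulVec (Kr.mulVec R)
    + KD.mulVec U with hDed
  set DKx : Matrix (Fin m) (Fin n) ℝ := -(s⁻¹ • (Γx * Bᵀ * P * Matrix.vecMulVec E X)
    + Γx * Bᵀ * P * Matrix.vecMulVec Ed X) with hDKx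
  set DKr : Matrix (Fin m) (Fin m) ℝ := -(s⁻¹ • (Γr * Bᵀ * P * Matrix.vecMulVec E R)
    + Γr * Bᵀ * P * Matrix.vecMulVec Ed R) with hDKr
  set DKd : Matrix (Fin n) (Fin m) ℝ := -(s⁻¹ • (Γd * P * Matrix.vecMulVec E U)
    + Γd * P * Matrix.vecMulVec Ed U) with hDKd
  set DK1 : Matrix (Fin n) (Fin m) ℝ := -(s⁻¹ • (Γ1 * P * Matrix.vecMulVec E U)) with hDK1
  have he' : ∀ i, HasDerivAt (fun τ => e τ i) (De i) t := hasDerivAt_pi.mp he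
  have hed' : ∀ i, HasDerivAt (fun τ => ed τ i) (Ded i) t := hasDerivAt_pi.mp hed
  -- derivative of the barrier quadratic form
  have hg : HasDerivAt (fun τ => e τ ⬝ᵥ P.mulVec (e τ))
      (De ⬝ᵥ P.mulVec E + E ⬝ᵥ P.mulVec De) t := quad_deriv P he' he'
  have hsub : HasDerivAt (fun τ => kb ^ 2 - e τ ⬝ᵥ P.mulVec (e τ))
      (-(De ⬝ᵥ P.mulVec E + E ⬝ᵥ P.mulVec De)) t := HasDerivAt.const_sub (kb ^ 2) hg
  have hev : ∀ᶠ τ in nhds t, 0 < kb ^ 2 - e τ ⬝ᵥ P.mulVec (e τ) :=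
    hsub.continuousAt.eventually (eventually_gt_nhds hs)
  have hlog1 : HasDerivAt (fun τ => Real.log (kb ^ 2 - e τ ⬝ᵥ P.mulVec (e τ)))
      (-(De ⬝ᵥ P.mulVec E + E ⬝ᵥ P.mulVec De) / s) t := hsub.log hs.ne'
  have hlog2 := HasDerivAt.const_sub (Real.log (kb ^ 2)) hlog1
  have hlog : HasDerivAt (fun τ => Real.log (kb ^ 2 / (kb ^ 2 - e τ ⬝ᵥ P.mulVec (e τ))))
      (-(-(De ⬝ᵥ P.mulVec E + E ⬝ᵥ P.mulVec De) / s)) t := by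
    refine hlog2.congr_of_eventuallyEq (hev.mono fun τ hτ => ?_)
    exact Real.log_div (by positivity) hτ.ne'
  have hh : HasDerivAt (fun τ => ed τ ⬝ᵥ P.mulVec (ed τ))
      (Ded ⬝ᵥ P.mulVec Ed + Ed ⬝ᵥ P.mulVec Ded) t := quad_deriv P hed' hed'
  have hTx := trace_deriv (K' := DKx) Γx⁻¹ hKtx
  have hTr := trace_deriv (K' := DKr) Γr⁻¹ hKtr
  have hTd := trace_deriv (K' := DKd) Γd⁻¹ hKd
  have hT1 := trace_deriv (K' := DK1) Γ1⁻¹ hK1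
  have hVfun : V = fun τ => (1/2) * (Real.log (kb ^ 2 / (kb ^ 2 - e τ ⬝ᵥ P.mulVec (e τ)))
      + ed τ ⬝ᵥ P.mulVec (ed τ)
      + ((Ktx τ)ᵀ * Γx⁻¹ * Ktx τ).trace
      + ((Ktr τ)ᵀ * Γr⁻¹ * Ktr τ).trace
      + ((Kd τ)ᵀ * Γd⁻¹ * Kd τ).trace
      + ((K1 τ)ᵀ * Γ1⁻¹ * K1 τ).trace) := funext hV
  rw [hVfun]
  have hmain := HasDerivAt.const_mul ((1:ℝ)/2)
    (((((hlog.add hh).add hTx).add hTr).add hTd).add hT1)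
  convert hmain using 1
  · rfl
  · rfl
  · rfl
  -- now a scalar identity
  have hBU : B.mulVec U = KD.mulVec U + KI.mulVec U := by rw [← hB, Matrix.add_mulVec]
  have Hg : De ⬝ᵥ P.mulVec E + E ⬝ᵥ P.mulVec De
      = -(E ⬝ᵥ Q.mulVec E) + 2 * (E ⬝ᵥ P.mulVec (B.mulVec (Kx.mulVec X)))
        + 2 * (E ⬝ᵥ P.mulVec (B.mulVec (Kr.mulVec R)))
        + 2 * (E ⬝ᵥ P.mulVec (KD.mulVec U)) + 2 * (E ⬝ᵥ P.mulVec (KI.mulVec U)) := by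
    rw [dot_symm P hPt De E, hDe, hBU]
    rw [Matrix.mulVec_add, Matrix.mulVec_add, Matrix.mulVec_add, Matrix.mulVec_add,
      dotProduct_add, dotProduct_add, dotProduct_add,
      dotProduct_add]
    have hq := lyap_quad hPt hlyap E
    linarith [hq]
  have Hh : Ded ⬝ᵥ P.mulVec Ed + Ed ⬝ᵥ P.mulVec Ded
      = -(Ed ⬝ᵥ Q.mulVec Ed) + 2 * (Ed ⬝ᵥ P.mulVec (B.mulVec (Kx.mulVec X)))
        + 2 * (Ed ⬝ᵥ P.mulVec (B.mulVec (Kr.mulVec R)))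
        + 2 * (Ed ⬝ᵥ P.mulVec (KD.mulVec U)) := by
    rw [dot_symm P hPt Ded Ed, hDed]
    rw [Matrix.mulVec_add, Matrix.mulVec_add, Matrix.mulVec_add,
      dotProduct_add, dotProduct_add, dotProduct_add]
    have hq := lyap_quad hPt hlyap Ed
    linarith [hq]
  have Kxkey : (Kxᵀ * Γx⁻¹ * DKx).trace
      = -(s⁻¹ * (E ⬝ᵥ P.mulVec (B.mulVec (Kx.mulVec X)))
          + Ed ⬝ᵥ P.mulVec (B.mulVec (Kx.mulVec X))) := by
    rw [hDKx, Matrix.mul_assoc Γx Bᵀ P, Matrix.mul_neg, Matrix.mul_add, Matrix.mul_smul,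
      Matrix.trace_neg, Matrix.trace_add, Matrix.trace_smul,
      trace_term Kx hΓxu (Bᵀ * P) E X, trace_term Kx hΓxu (Bᵀ * P) Ed X,
      Matrix.transpose_mul, Matrix.transpose_transpose, hPt,
      ← Matrix.mulVec_mulVec, ← Matrix.mulVec_mulVec, smul_eq_mul]
  have Krkey : (Krᵀ * Γr⁻¹ * DKr).trace
      = -(s⁻¹ * (E ⬝ᵥ P.mulVec (B.mulVec (Kr.mulVec R)))
          + Ed ⬝ᵥ P.mulVec (B.mulVec (Kr.mulVec R))) := by
    rw [hDKr, Matrix.mul_assoc Γr Bᵀ P, Matrix.mul_neg, Matrix.mul_add, Matrix.mul_smul,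
      Matrix.trace_neg, Matrix.trace_add, Matrix.trace_smul,
      trace_term Kr hΓru (Bᵀ * P) E R, trace_term Kr hΓru (Bᵀ * P) Ed R,
      Matrix.transpose_mul, Matrix.transpose_transpose, hPt,
      ← Matrix.mulVec_mulVec, ← Matrix.mulVec_mulVec, smul_eq_mul]
  have Kdkey : (KDᵀ * Γd⁻¹ * DKd).trace
      = -(s⁻¹ * (E ⬝ᵥ P.mulVec (KD.mulVec U)) + Ed ⬝ᵥ P.mulVec (KD.mulVec U)) := by
    rw [hDKd, Matrix.mul_neg, Matrix.mul_add, Matrix.mul_smul,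
      Matrix.trace_neg, Matrix.trace_add, Matrix.trace_smul,
      trace_term KD hΓdu P E U, trace_term KD hΓdu P Ed U, hPt,
      ← Matrix.mulVec_mulVec, smul_eq_mul]
  have K1key : (KIᵀ * Γ1⁻¹ * DK1).trace = -(s⁻¹ * (E ⬝ᵥ P.mulVec (KI.mulVec U))) := by
    rw [hDK1, Matrix.mul_neg, Matrix.mul_smul, Matrix.trace_neg, Matrix.trace_smul,
      trace_term KI hΓ1u P E U, hPt, ← Matrix.mulVec_mulVec, smul_eq_mul]
  rw [trace_flip Γx hΓxt DKx Kx, trace_flip Γr hΓrt DKr Kr, trace_flip Γd hΓdt DKd KD,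
    trace_flip Γ1 hΓ1t DK1 KI, Hg, Hh, Kxkey, Krkey, Kdkey, K1key]
  field_simp
  ring
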